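/- arXiv:1701.05065 — 2 statements merged into one kernel-verified Lean document; each statement's English description precedes it below -/
import Mathlib

section
/- Oracle inequality for the data-driven trimming level with a fixed classifier. Let (Y_1,X_1),…,(Y_n,X_n) be i.i.d. with law P on {0,1}×ℝ^p, let g be a fixed classifier and α_max ∈ (0,1). Define the penalty pen(α) = (1/(1−α)) √(ln(n)/(2n)) for α ∈ [0, α_max]. Suppose α̂ is a measurable function of the sample, taking values in [0, α_max], such that for every realization of the sample and every α ∈ [0, α_max] one has R_{n,α̂}(g) + pen(α̂) ≤ R_{n,α}(g) + pen(α). Then E[R_{α̂}(g)] ≤ inf_{α ∈ [0,α_max]} ( R_α(g) + pen(α) + √(R(g))/(√n (1−α)) ) + (1/(1−α_max)) √(2π/n) + 1/(n (1−α_max)²). -/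
/-! With `Z = R_n(g) - R(g)`, the map `t ↦ (t - α)₊` is monotone and 1-Lipschitz, so
`R_α̂(g) ≤ R_{n,α̂}(g) + Z₋ / (1 - α_max)` and `R_{n,α}(g) ≤ R_α(g) + Z₊ / (1 - α)`; in between,
minimality of `α̂` and `pen ≥ 0` give `R_{n,α̂}(g) ≤ R_{n,α}(g) + pen α`. Taking expectations,
`E Z₊, E Z₋ ≤ E|Z| ≤ √(Var R_n(g)) ≤ √(R(1 - R)/n)` (Bhatia–Davis for each summand), which is
at most `√R / √n` and at most `√(2π / n)`. -/

open MeasureTheory ProbabilityTheory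

noncomputable section

/-- The classification error `R(g) = P({(y,x) : g(x) ≠ y})`. -/
def classErr {p : ℕ} (P : Measure (Bool × (Fin p → ℝ))) (g : (Fin p → ℝ) → Bool) : ℝ :=
  (P {z | g z.2 ≠ z.1}).toReal

/-- Trimmed classification error `R_α(g) = (R(g) − α)_+ / (1 − α)`. -/
def trimmedErr {p : ℕ} (P : Measure (Bool × (Fin p → ℝ))) (α : ℝ)
    (g : (Fin p → ℝ) → Bool) : ℝ :=
  max (classErr P g - α) 0 / (1 - α)

/-- Empirical classification error `R_n(g) = (1/n) Σ_i 1{g(X_i) ≠ Y_i}`. -/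
def empErr {p : ℕ} (n : ℕ) (ξ : Fin n → Bool × (Fin p → ℝ))
    (g : (Fin p → ℝ) → Bool) : ℝ :=
  (1 / n) * ∑ i, if g (ξ i).2 ≠ (ξ i).1 then (1 : ℝ) else 0

/-- Empirical trimmed classification error `R_{n,α}(g) = (R_n(g) − α)_+/(1−α)`. -/
def empTrimmedErr {p : ℕ} (n : ℕ) (α : ℝ) (ξ : Fin n → Bool × (Fin p → ℝ))
    (g : (Fin p → ℝ) → Bool) : ℝ :=
  max (empErr n ξ g - α) 0 / (1 - α)

section Concentration

variable {Ω : Type*} [MeasurableSpace Ω] {μ : Measure Ω}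

lemma integral_abs_sub_integral_le_sqrt_variance [IsProbabilityMeasure μ] {X : Ω → ℝ}
    (hX : MemLp X 2 μ) : ∫ ω, |X ω - μ[X]| ∂μ ≤ √(Var[X; μ]) := by
  have hY : MemLp (fun ω => |X ω - μ[X]|) 2 μ := (hX.sub (memLp_const _)).abs
  -- `0 ≤ Var |X - E X|` is the Cauchy–Schwarz inequality `(E |X - E X|)² ≤ E (X - E X)²`.
  have hsq := variance_nonneg (fun ω => |X ω - μ[X]|) μ
  simp only [variance_eq_sub hY, Pi.pow_apply, sq_abs, sub_nonneg] at hsq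
  rw [variance_eq_integral hX.aestronglyMeasurable.aemeasurable]
  exact Real.le_sqrt_of_sq_le hsq

lemma integral_le_add_integral_abs_div [IsProbabilityMeasure μ] {F Z : Ω → ℝ} {c a b : ℝ}
    (ha : 0 < a) (hb : 0 < b) (hF : ∀ ω, 0 ≤ F ω) (hZ : Integrable Z μ)
    (hle : ∀ ω, F ω ≤ c + max (Z ω) 0 / a + max (-Z ω) 0 / b) :
    ∫ ω, F ω ∂μ ≤ c + (∫ ω, |Z ω| ∂μ) / a + (∫ ω, |Z ω| ∂μ) / b := by
  have hZa : Integrable (fun ω => |Z ω| / a) μ := hZ.abs.div_const a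
  have hZb : Integrable (fun ω => |Z ω| / b) μ := hZ.abs.div_const b
  have hca : Integrable (fun ω => c + |Z ω| / a) μ := (integrable_const c).add hZa
  calc ∫ ω, F ω ∂μ ≤ ∫ ω, c + |Z ω| / a + |Z ω| / b ∂μ := by
        refine integral_mono_of_nonneg (ae_of_all _ hF) (hca.add hZb)
          (ae_of_all _ fun ω => (hle ω).trans ?_)
        beta_reduce
        gcongr
        · exact max_le (le_abs_self _) (abs_nonneg _)
        · exact max_le (neg_le_abs _) (abs_nonneg _)
    _ = c + (∫ ω, |Z ω| ∂μ) / a + (∫ ω, |Z ω| ∂μ) / b := by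
        rw [integral_add hca hZb, integral_add (integrable_const c) hZa, integral_div,
          integral_div, integral_const, probReal_univ, one_smul]

variable {n : ℕ} {X : Fin n → Ω → ℝ} {m : ℝ}

lemma integral_mean_eq (hn : 0 < n) (hX : ∀ i, Integrable (X i) μ) (hmean : ∀ i, μ[X i] = m) :
    ∫ ω, (1 / n : ℝ) * ∑ i, X i ω ∂μ = m := by
  rw [integral_const_mul, integral_finsetSum _ fun i _ => hX i]
  simp only [hmean, Finset.sum_const, Finset.card_univ, Fintype.card_fin, nsmul_eq_mul]
  field_simp

lemma variance_mean_le [IsProbabilityMeasure μ] (hX : ∀ i, AEMeasurable (X i) μ)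
    (hindep : Pairwise fun i j => IndepFun (X i) (X j) μ)
    (hbound : ∀ i, ∀ᵐ ω ∂μ, X i ω ∈ Set.Icc (0 : ℝ) 1) (hmean : ∀ i, μ[X i] = m) :
    Var[fun ω => (1 / n : ℝ) * ∑ i, X i ω; μ] ≤ m * (1 - m) / n := by
  have hL2 i : MemLp (X i) 2 μ := memLp_of_bounded (hbound i) (hX i).aestronglyMeasurable 2
  have hsum : Var[∑ i, X i; μ] = ∑ i, Var[X i; μ] :=
    IndepFun.variance_sum (fun i _ => hL2 i) fun i _ j _ hij => hindep hij
  have hvar i : Var[X i; μ] ≤ m * (1 - m) := by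
    have := variance_le_sub_mul_sub (hbound i) (hX i)
    rwa [hmean i, sub_zero, mul_comm] at this
  have hmean_fun : (fun ω => (1 / n : ℝ) * ∑ i, X i ω) = fun ω => (1 / n : ℝ) * (∑ i, X i) ω := by
    simp only [Finset.sum_apply]
  rw [hmean_fun, variance_const_mul, hsum]
  calc (1 / n : ℝ) ^ 2 * ∑ i, Var[X i; μ] ≤ (1 / n : ℝ) ^ 2 * (n * (m * (1 - m))) := by
        gcongr
        simpa using Finset.sum_le_sum fun i (_ : i ∈ Finset.univ) => hvar i
    _ = m * (1 - m) / n := by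
        rcases n.eq_zero_or_pos with rfl | hn
        · simp
        · field_simp

lemma integral_abs_mean_sub_le [IsProbabilityMeasure μ] (hn : 0 < n)
    (hX : ∀ i, AEMeasurable (X i) μ) (hindep : Pairwise fun i j => IndepFun (X i) (X j) μ)
    (hbound : ∀ i, ∀ᵐ ω ∂μ, X i ω ∈ Set.Icc (0 : ℝ) 1) (hmean : ∀ i, μ[X i] = m) :
    ∫ ω, |(1 / n : ℝ) * ∑ i, X i ω - m| ∂μ ≤ √(m * (1 - m) / n) := by
  have hL2 i : MemLp (X i) 2 μ := memLp_of_bounded (hbound i) (hX i).aestronglyMeasurable 2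
  have hmeanL2 : MemLp (fun ω => (1 / n : ℝ) * ∑ i, X i ω) 2 μ :=
    (memLp_finsetSum _ fun i _ => hL2 i).const_mul _
  have key := integral_abs_sub_integral_le_sqrt_variance hmeanL2
  rw [integral_mean_eq hn (fun i => (hL2 i).integrable one_le_two) hmean] at key
  exact key.trans (Real.sqrt_le_sqrt (variance_mean_le hX hindep hbound hmean))

end Concentration

lemma le_csInf_image_add {ι : Type*} {s : Set ι} {f : ι → ℝ} {x C : ℝ} (hs : s.Nonempty)
    (h : ∀ a ∈ s, x ≤ f a + C) : x ≤ sInf (f '' s) + C :=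
  sub_le_iff_le_add.1 <| le_csInf (hs.image f) <|
    Set.forall_mem_image.2 fun a ha => sub_le_iff_le_add.2 (h a ha)

lemma max_sub_le_max_sub_add (r s α : ℝ) : max (r - α) 0 ≤ max (s - α) 0 + max (r - s) 0 :=
  max_le (by linarith [le_max_left (s - α) 0, le_max_left (r - s) 0]) (by positivity)

section Classification

variable {p : ℕ} {P : Measure (Bool × (Fin p → ℝ))} {g : (Fin p → ℝ) → Bool}

-- `empErr n ξ g` is definitionally the sample mean `(1 / n) * ∑ i, zeroOneLoss g (ξ i)`.
def zeroOneLoss (g : (Fin p → ℝ) → Bool) (z : Bool × (Fin p → ℝ)) : ℝ :=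
  if g z.2 ≠ z.1 then 1 else 0

lemma zeroOneLoss_eq_indicator (g : (Fin p → ℝ) → Bool) :
    zeroOneLoss g = {z | g z.2 ≠ z.1}.indicator 1 := by
  ext z
  simp [zeroOneLoss, Set.indicator_apply]

lemma measurableSet_misclassified (hg : Measurable g) :
    MeasurableSet {z : Bool × (Fin p → ℝ) | g z.2 ≠ z.1} :=
  (measurableSet_eq_fun (hg.comp measurable_snd) measurable_fst).compl

lemma measurable_zeroOneLoss (hg : Measurable g) : Measurable (zeroOneLoss g) := by
  rw [zeroOneLoss_eq_indicator]
  exact measurable_one.indicator (measurableSet_misclassified hg)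

lemma zeroOneLoss_mem_Icc (g : (Fin p → ℝ) → Bool) (z : Bool × (Fin p → ℝ)) :
    zeroOneLoss g z ∈ Set.Icc (0 : ℝ) 1 := by
  unfold zeroOneLoss; split_ifs <;> norm_num

lemma integral_zeroOneLoss (hg : Measurable g) : ∫ z, zeroOneLoss g z ∂P = classErr P g := by
  rw [zeroOneLoss_eq_indicator, integral_indicator_one (measurableSet_misclassified hg)]
  rfl

lemma trimmedErr_nonneg {α : ℝ} (hα : α ≤ 1) : 0 ≤ trimmedErr P α g :=
  div_nonneg (le_max_right _ _) (sub_nonneg.2 hα)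

lemma trimmedErr_le_of_penalized_min {n : ℕ} (ξ : Fin n → Bool × (Fin p → ℝ)) {pen : ℝ → ℝ}
    {α' α αmax : ℝ} (hα' : α' ≤ αmax) (hα : α ≤ αmax) (hαmax : αmax < 1) (hpen : 0 ≤ pen α')
    (hmin : empTrimmedErr n α' ξ g + pen α' ≤ empTrimmedErr n α ξ g + pen α) :
    trimmedErr P α' g ≤ trimmedErr P α g + pen α +
      max (empErr n ξ g - classErr P g) 0 / (1 - α) +
      max (classErr P g - empErr n ξ g) 0 / (1 - αmax) := by
  have hlow : trimmedErr P α' g ≤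
      empTrimmedErr n α' ξ g + max (classErr P g - empErr n ξ g) 0 / (1 - αmax) :=
    calc trimmedErr P α' g
        ≤ empTrimmedErr n α' ξ g + max (classErr P g - empErr n ξ g) 0 / (1 - α') := by
          rw [trimmedErr, empTrimmedErr, ← add_div]
          gcongr
          · linarith
          · exact max_sub_le_max_sub_add _ _ _
      _ ≤ _ := by gcongr
  have hup : empTrimmedErr n α ξ g ≤
      trimmedErr P α g + max (empErr n ξ g - classErr P g) 0 / (1 - α) := by
    rw [trimmedErr, empTrimmedErr, ← add_div]
    gcongr
    · linarith
    · exact max_sub_le_max_sub_add _ _ _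
  linarith

variable {Ω : Type*} [MeasurableSpace Ω] {μ : Measure Ω} {n : ℕ}
  {ξ : Fin n → Ω → Bool × (Fin p → ℝ)}

lemma integrable_empErr [IsFiniteMeasure μ] (hg : Measurable g)
    (hmeas : ∀ i, Measurable (ξ i)) : Integrable (fun ω => empErr n (fun i => ξ i ω) g) μ :=
  (integrable_finsetSum _ fun i _ =>
    Integrable.of_mem_Icc 0 1 ((measurable_zeroOneLoss hg).comp (hmeas i)).aemeasurable
      (ae_of_all _ fun _ => zeroOneLoss_mem_Icc g _)).const_mul _

lemma integral_abs_empErr_sub_classErr_le [IsProbabilityMeasure μ] (hn : 0 < n)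
    (hg : Measurable g) (hmeas : ∀ i, Measurable (ξ i))
    (hindep : Pairwise fun i j => IndepFun (ξ i) (ξ j) μ) (hlaw : ∀ i, μ.map (ξ i) = P) :
    ∫ ω, |empErr n (fun i => ξ i ω) g - classErr P g| ∂μ ≤
      √(classErr P g * (1 - classErr P g) / n) := by
  have hloss := measurable_zeroOneLoss hg
  refine integral_abs_mean_sub_le hn (fun i => (hloss.comp (hmeas i)).aemeasurable)
    (fun i j hij => (hindep hij).comp hloss hloss)
    (fun i => ae_of_all _ fun _ => zeroOneLoss_mem_Icc g _) fun i => ?_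
  change ∫ ω, zeroOneLoss g (ξ i ω) ∂μ = classErr P g
  rw [← integral_map (hmeas i).aemeasurable hloss.aestronglyMeasurable, hlaw i,
    integral_zeroOneLoss hg]

lemma integral_trimmedErr_le_of_penalized_min [IsProbabilityMeasure μ] (hg : Measurable g)
    (hmeas : ∀ i, Measurable (ξ i)) {pen : ℝ → ℝ} {αhat : Ω → ℝ} {α αmax : ℝ} (hα : α ≤ αmax)
    (hαmax : αmax < 1) (hαhat : ∀ ω, αhat ω ≤ αmax) (hpen : ∀ ω, 0 ≤ pen (αhat ω))
    (hmin : ∀ ω, empTrimmedErr n (αhat ω) (fun i => ξ i ω) g + pen (αhat ω) ≤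
      empTrimmedErr n α (fun i => ξ i ω) g + pen α) :
    ∫ ω, trimmedErr P (αhat ω) g ∂μ ≤ trimmedErr P α g + pen α +
      (∫ ω, |empErr n (fun i => ξ i ω) g - classErr P g| ∂μ) / (1 - α) +
      (∫ ω, |empErr n (fun i => ξ i ω) g - classErr P g| ∂μ) / (1 - αmax) := by
  refine integral_le_add_integral_abs_div (by linarith) (by linarith)
    (fun ω => trimmedErr_nonneg (by linarith [hαhat ω]))
    ((integrable_empErr hg hmeas).sub (integrable_const _)) fun ω => ?_
  simpa only [neg_sub] using
    trimmedErr_le_of_penalized_min (fun i => ξ i ω) (hαhat ω) hα hαmax (hpen ω) (hmin ω)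

end Classification

theorem oracle_fixed_classifier_general {p : ℕ}
    (P : Measure (Bool × (Fin p → ℝ))) [IsProbabilityMeasure P]
    {g : (Fin p → ℝ) → Bool} (hg : Measurable g)
    {αmax : ℝ} (hαmax : αmax ∈ Set.Ioo (0 : ℝ) 1)
    {Ω : Type*} [MeasurableSpace Ω] (μ : Measure Ω) [IsProbabilityMeasure μ]
    {n : ℕ} (hn : 0 < n) (ξ : Fin n → Ω → Bool × (Fin p → ℝ))
    (hmeas : ∀ i, Measurable (ξ i))
    (hindep : iIndepFun ξ μ)
    (hlaw : ∀ i, μ.map (ξ i) = P)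
    (pen : ℝ → ℝ)
    (hpen : ∀ α, pen α = (1 / (1 - α)) * Real.sqrt (Real.log n / (2 * n)))
    (αhat : Ω → ℝ)
    (hαhat_mem : ∀ ω, αhat ω ∈ Set.Icc (0 : ℝ) αmax)
    (hαhat_min : ∀ ω, ∀ α ∈ Set.Icc (0 : ℝ) αmax,
      empTrimmedErr n (αhat ω) (fun i => ξ i ω) g + pen (αhat ω) ≤
        empTrimmedErr n α (fun i => ξ i ω) g + pen α) :
    (∫ ω, trimmedErr P (αhat ω) g ∂μ) ≤
      sInf ((fun α => trimmedErr P α g + pen α +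
          Real.sqrt (classErr P g) / (Real.sqrt n * (1 - α))) '' Set.Icc (0 : ℝ) αmax) +
        (1 / (1 - αmax)) * Real.sqrt (2 * Real.pi / n) +
        1 / (n * (1 - αmax) ^ 2) := by
  obtain ⟨hα0, hα1⟩ := hαmax
  have hdev := integral_abs_empErr_sub_classErr_le hn hg hmeas (fun i j hij => hindep.indepFun hij)
    hlaw
  set R := classErr P g
  have hR : 0 ≤ R := ENNReal.toReal_nonneg
  have hdev_R : √(R * (1 - R) / n) ≤ √R / √n := by
    rw [← Real.sqrt_div' _ n.cast_nonneg]
    gcongr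
    nlinarith
  have hdev_pi : √(R * (1 - R) / n) ≤ √(2 * Real.pi / n) := by
    gcongr √(?_ / _)
    nlinarith [sq_nonneg (R - 1 / 2), Real.pi_gt_three]
  have hpen_nonneg ω : 0 ≤ pen (αhat ω) := by
    have : 0 < 1 - αhat ω := by linarith [(hαhat_mem ω).2]
    rw [hpen]
    positivity
  refine le_add_of_le_of_nonneg (le_csInf_image_add (Set.nonempty_Icc.2 hα0.le) fun α hα => ?_)
    (by positivity)
  calc ∫ ω, trimmedErr P (αhat ω) g ∂μ
      ≤ trimmedErr P α g + pen α + (∫ ω, |empErr n (fun i => ξ i ω) g - R| ∂μ) / (1 - α) +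
          (∫ ω, |empErr n (fun i => ξ i ω) g - R| ∂μ) / (1 - αmax) :=
        integral_trimmedErr_le_of_penalized_min hg hmeas hα.2 hα1 (fun ω => (hαhat_mem ω).2)
          hpen_nonneg fun ω => hαhat_min ω α hα
    _ ≤ trimmedErr P α g + pen α + √R / √n / (1 - α) + √(2 * Real.pi / n) / (1 - αmax) := by
        have : 0 < 1 - α := by linarith [hα.2]
        gcongr
        exacts [hdev.trans hdev_R, hdev.trans hdev_pi]
    _ = _ := by rw [div_div, one_div_mul_eq_div]

/-- Theorem 1: oracle inequality for the data-driven trimming level `α̂` chosen by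
penalized empirical trimmed risk minimization with a fixed classifier `g`. -/
theorem oracle_fixed_classifier {p : ℕ}
    (P : Measure (Bool × (Fin p → ℝ))) [IsProbabilityMeasure P]
    {g : (Fin p → ℝ) → Bool} (hg : Measurable g)
    {αmax : ℝ} (hαmax : αmax ∈ Set.Ioo (0 : ℝ) 1)
    {Ω : Type*} [MeasurableSpace Ω] (μ : Measure Ω) [IsProbabilityMeasure μ]
    {n : ℕ} (hn : 0 < n) (ξ : Fin n → Ω → Bool × (Fin p → ℝ))
    (hmeas : ∀ i, Measurable (ξ i))
    (hindep : iIndepFun ξ μ)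
    (hlaw : ∀ i, μ.map (ξ i) = P)
    (pen : ℝ → ℝ)
    (hpen : ∀ α, pen α = (1 / (1 - α)) * Real.sqrt (Real.log n / (2 * n)))
    (αhat : Ω → ℝ) (hαhat_meas : Measurable αhat)
    (hαhat_mem : ∀ ω, αhat ω ∈ Set.Icc (0 : ℝ) αmax)
    (hαhat_min : ∀ ω, ∀ α ∈ Set.Icc (0 : ℝ) αmax,
      empTrimmedErr n (αhat ω) (fun i => ξ i ω) g + pen (αhat ω) ≤
        empTrimmedErr n α (fun i => ξ i ω) g + pen α) :
    (∫ ω, trimmedErr P (αhat ω) g ∂μ) ≤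
      sInf ((fun α => trimmedErr P α g + pen α +
          Real.sqrt (classErr P g) / (Real.sqrt n * (1 - α))) '' Set.Icc (0 : ℝ) αmax) +
        (1 / (1 - αmax)) * Real.sqrt (2 * Real.pi / n) +
        1 / (n * (1 - αmax) ^ 2) :=
  oracle_fixed_classifier_general P hg hαmax μ hn ξ hmeas hindep hlaw pen hpen αhat hαhat_mem
    hαhat_min
end
end

section
/- Let α₁, α₂ be trimming levels with α₁ ≤ α₂ ≤ α₁ + 1/n and α₁ ≤ α₂ ≤ α_max < 1, let g be a classifier and let (Y_1,X_1),…,(Y_n,X_n) be any sample of size n. Then the empirical trimmed classification errors satisfy R_{n,α₁}(g) − R_{n,α₂}(g) ≤ 1/(n (1−α_max)²). -/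
open MeasureTheory

noncomputable section

lemma empErr_nonneg {p : ℕ} (n : ℕ) (ξ : Fin n → Bool × (Fin p → ℝ))
    (g : (Fin p → ℝ) → Bool) : 0 ≤ empErr n ξ g := by
  unfold empErr
  apply mul_nonneg (by positivity)
  apply Finset.sum_nonneg
  intro i _
  split_ifs <;> norm_num

lemma empErr_le_one {p : ℕ} {n : ℕ} (hn : 0 < n) (ξ : Fin n → Bool × (Fin p → ℝ))
    (g : (Fin p → ℝ) → Bool) : empErr n ξ g ≤ 1 := by
  unfold empErr
  have hn' : (0:ℝ) < n := by exact_mod_cast hn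
  have hsum : (∑ i : Fin n, if g (ξ i).2 ≠ (ξ i).1 then (1 : ℝ) else 0) ≤ n := by
    calc (∑ i : Fin n, if g (ξ i).2 ≠ (ξ i).1 then (1 : ℝ) else 0)
        ≤ ∑ i : Fin n, (1:ℝ) := by
          apply Finset.sum_le_sum; intro i _; split_ifs <;> norm_num
      _ = n := by simp
  rw [div_mul_eq_mul_div, one_mul, div_le_one hn']
  exact hsum

/-- Proposition 4 (empirical version): for trimming levels `α₁ ≤ α₂ ≤ α₁ + 1/n`
with `α₂ ≤ α_max < 1` and any sample,
`R_{n,α₁}(g) − R_{n,α₂}(g) ≤ 1/(n(1−α_max)²)`. -/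
theorem empTrimmedErr_close_levels {p : ℕ}
    {g : (Fin p → ℝ) → Bool} (hg : Measurable g)
    {n : ℕ} (hn : 0 < n) (ξ : Fin n → Bool × (Fin p → ℝ))
    {α₁ α₂ αmax : ℝ}
    (h₁₂ : α₁ ≤ α₂) (h₂ : α₂ ≤ α₁ + 1 / n)
    (h₂max : α₂ ≤ αmax) (hmax : αmax < 1) :
    empTrimmedErr n α₁ ξ g - empTrimmedErr n α₂ ξ g ≤ 1 / (n * (1 - αmax) ^ 2) := by
  set R := empErr n ξ g with hR
  have hR0 : 0 ≤ R := empErr_nonneg n ξ g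
  have hR1 : R ≤ 1 := empErr_le_one hn ξ g
  have hn' : (0:ℝ) < n := by exact_mod_cast hn
  have h1m : (0:ℝ) < 1 - αmax := by linarith
  have h1b : (0:ℝ) < 1 - α₂ := by linarith
  have h1a : (0:ℝ) < 1 - α₁ := by linarith
  have hdn : n * (α₂ - α₁) ≤ 1 := by
    have : α₂ - α₁ ≤ 1 / n := by linarith
    calc (n:ℝ) * (α₂ - α₁) ≤ n * (1/n) := by
          exact mul_le_mul_of_nonneg_left this (le_of_lt hn')
      _ = 1 := by field_simp
  unfold empTrimmedErr
  rw [← hR]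
  rcases le_or_gt R α₁ with hc1 | hc1
  · rw [max_eq_right (by linarith), max_eq_right (by linarith)]
    simp only [zero_div, sub_zero]
    positivity
  · rcases le_or_gt R α₂ with hc2 | hc2
    · rw [max_eq_left (by linarith), max_eq_right (by linarith)]
      simp only [zero_div, sub_zero]
      have hm0 : 0 ≤ αmax := le_trans hR0 (le_trans hc2 h₂max)
      rw [div_le_div_iff₀ h1a (by positivity)]
      have h1 : (n:ℝ) * (R - α₁) ≤ 1 := by nlinarith
      nlinarith [sq_nonneg (1 - αmax), mul_pos hn' h1m]
    · rw [max_eq_left (by linarith), max_eq_left (by linarith)]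
      rw [div_sub_div _ _ (ne_of_gt h1a) (ne_of_gt h1b),
        div_le_div_iff₀ (by positivity) (by positivity)]
      have key : (R - α₁) * (1 - α₂) - (1 - α₁) * (R - α₂)
          = (α₂ - α₁) * (1 - R) := by ring
      have hba : 0 ≤ α₂ - α₁ := by linarith
      have h1R : 0 ≤ 1 - R := by linarith
      have hmb : 1 - αmax ≤ 1 - α₂ := by linarith
      have hma : 1 - αmax ≤ 1 - α₁ := by linarith
      have hsq : (1 - αmax)^2 ≤ (1 - α₁) * (1 - α₂) := by nlinarith
      have hA : (n:ℝ) * (α₂ - α₁) * (1 - R) ≤ 1 := by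
        nlinarith [mul_nonneg (le_of_lt hn') hba]
      calc ((R - α₁) * (1 - α₂) - (1 - α₁) * (R - α₂)) * (↑n * (1 - αmax) ^ 2)
          = ((n:ℝ) * (α₂ - α₁) * (1 - R)) * (1 - αmax)^2 := by rw [key]; ring
        _ ≤ 1 * (1 - αmax)^2 := mul_le_mul_of_nonneg_right hA (sq_nonneg _)
        _ ≤ 1 * ((1 - α₁) * (1 - α₂)) := by linarith
  done

end
end
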